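/- arXiv:2304.10135 — 3 statements merged into one kernel-verified Lean document; each statement's English description precedes it below -/
import Mathlib

section
/- Let Γ be a finite group of order n and let M be an abelian group equipped with an action of Γ by group automorphisms, such that multiplication by n is surjective on M. Let M[n] ⊆ M[n²] ⊆ M denote the n-torsion and n²-torsion Γ-submodules. If two classes x, y ∈ H²(Γ, M[n]) have the same image in H²(Γ, M) under the map induced by the inclusion M[n] ⊆ M, then their images in H²(Γ, M[n²]) under the map induced by the inclusion M[n] ⊆ M[n²] coincide. -/
def IsGroupTwoCocycle {Γ M : Type*} [Group Γ] [AddCommGroup M]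
    (ρ : Γ →* Multiplicative (AddAut M)) (f : Γ → Γ → M) : Prop :=
  ∀ g h k : Γ, Multiplicative.toAdd (ρ g) (f h k) - f (g * h) k + f g (h * k) - f g h = 0

/-!
Multiplying `f - g = ∂h` by `n` shows that `n • h` is a 1-cocycle with values in `M`. Since
`H¹(Γ, M)` is killed by `n = |Γ|`, the cocycle `n • (n • h)` is the coboundary of some `c`, and
writing `c = n² • m` the cochain `h' := h + ∂m` has the same coboundary as `h` and is killed by
`n²`.
-/

section OneCocycle

variable {Γ M : Type*} [Group Γ] [AddCommGroup M] (ρ : Γ →* Multiplicative (AddAut M))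

def IsGroupOneCocycle (z : Γ → M) : Prop :=
  ∀ x y : Γ, z (x * y) = Multiplicative.toAdd (ρ x) (z y) + z x

variable {ρ}

theorem IsGroupOneCocycle.coboundary_eq_zero {z : Γ → M} (hz : IsGroupOneCocycle ρ z)
    (x y : Γ) : Multiplicative.toAdd (ρ x) (z y) - z (x * y) + z x = 0 := by
  rw [hz x y]
  abel

theorem isGroupOneCocycle_apply_sub_self (m : M) :
    IsGroupOneCocycle ρ fun x => Multiplicative.toAdd (ρ x) m - m := by
  intro x y
  have hmul : Multiplicative.toAdd (ρ (x * y)) m =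
      Multiplicative.toAdd (ρ x) (Multiplicative.toAdd (ρ y) m) := by
    rw [map_mul]
    rfl
  simp only [hmul, map_sub]
  abel

theorem isGroupOneCocycle_smul_of_smul_coboundary_eq_zero {h : Γ → M} {n : ℕ}
    (hn : ∀ x y : Γ, n • (Multiplicative.toAdd (ρ x) (h y) - h (x * y) + h x) = 0) :
    IsGroupOneCocycle ρ (n • h) := by
  intro x y
  rw [← sub_eq_zero, Pi.smul_apply, Pi.smul_apply, Pi.smul_apply, map_nsmul, ← neg_eq_zero,
    ← hn x y]
  simp only [smul_add, smul_sub]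
  abel

/-- `H¹(Γ, M)` is killed by `|Γ|`: summing the cocycle identity over `y` gives
`∑ z = ρ x (∑ z) + |Γ| • z x`. -/
theorem IsGroupOneCocycle.exists_card_smul_eq [Finite Γ] {z : Γ → M}
    (hz : IsGroupOneCocycle ρ z) :
    ∃ c : M, ∀ x : Γ, Nat.card Γ • z x = c - Multiplicative.toAdd (ρ x) c := by
  cases nonempty_fintype Γ
  refine ⟨∑ γ, z γ, fun x => eq_sub_of_add_eq' ?_⟩
  calc Multiplicative.toAdd (ρ x) (∑ γ, z γ) + Nat.card Γ • z x
      = ∑ γ, (Multiplicative.toAdd (ρ x) (z γ) + z x) := by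
        rw [Finset.sum_add_distrib, map_sum, Finset.sum_const, Finset.card_univ,
          Nat.card_eq_fintype_card]
    _ = ∑ γ, z (x * γ) := Finset.sum_congr rfl fun γ _ => (hz x γ).symm
    _ = ∑ γ, z γ := Equiv.sum_comp (Equiv.mulLeft x) z

end OneCocycle

theorem eq_in_H2_torsion_sq_of_eq_in_H2_general
    {Γ M : Type*} [Group Γ] [Finite Γ] [AddCommGroup M]
    (ρ : Γ →* Multiplicative (AddAut M)) (n : ℕ) (hn : n = Nat.card Γ)
    (hdiv : ∀ m : M, ∃ m' : M, n • m' = m)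
    (f g : Γ → Γ → M)
    (hfn : ∀ x y : Γ, n • f x y = 0) (hgn : ∀ x y : Γ, n • g x y = 0)
    (h : Γ → M)
    (hh : ∀ x y : Γ, f x y - g x y = Multiplicative.toAdd (ρ x) (h y) - h (x * y) + h x) :
    ∃ h' : Γ → M, (∀ x : Γ, n ^ 2 • h' x = 0) ∧
      (∀ x y : Γ, f x y - g x y = Multiplicative.toAdd (ρ x) (h' y) - h' (x * y) + h' x) := by
  have hz : IsGroupOneCocycle ρ (n • h) :=
    isGroupOneCocycle_smul_of_smul_coboundary_eq_zero fun x y => by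
      rw [← hh, smul_sub, hfn, hgn, sub_zero]
  obtain ⟨c, hc⟩ := hz.exists_card_smul_eq
  rw [← hn] at hc
  obtain ⟨m, rfl⟩ : ∃ m : M, n ^ 2 • m = c := by
    obtain ⟨m₁, rfl⟩ := hdiv c
    obtain ⟨m, rfl⟩ := hdiv m₁
    exact ⟨m, by rw [pow_two, mul_smul]⟩
  refine ⟨h + fun x => Multiplicative.toAdd (ρ x) m - m, fun x => ?_, fun x y => ?_⟩
  · have hx : n ^ 2 • h x = n ^ 2 • m - Multiplicative.toAdd (ρ x) (n ^ 2 • m) := by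
      simpa only [Pi.smul_apply, ← mul_smul, ← pow_two] using hc x
    rw [Pi.add_apply, smul_add, hx, smul_sub, ← map_nsmul]
    abel
  · rw [hh, Pi.add_apply, Pi.add_apply, Pi.add_apply, map_add, ← add_zero (_ - h (x * y) + _),
      ← (isGroupOneCocycle_apply_sub_self m).coboundary_eq_zero x y]
    abel

/-- Let `Γ` be a finite group of order `n` and `M` an abelian group with a
`Γ`-action by automorphisms such that multiplication by `n` is surjective on `M`.  If two
classes of `H²(Γ, M[n])`, represented by 2-cocycles `f, g` valued in the `n`-torsion
submodule `M[n]`, have the same image in `H²(Γ, M)` (i.e. `f - g` is the coboundary of a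
cochain `h` valued in `M`), then their images in `H²(Γ, M[n²])` coincide (i.e. `f - g` is
the coboundary of a cochain `h'` valued in the `n²`-torsion submodule `M[n²]`). -/
theorem eq_in_H2_torsion_sq_of_eq_in_H2
    {Γ M : Type*} [Group Γ] [Finite Γ] [AddCommGroup M]
    (ρ : Γ →* Multiplicative (AddAut M)) (n : ℕ) (hn : n = Nat.card Γ)
    (hdiv : ∀ m : M, ∃ m' : M, n • m' = m)
    (f g : Γ → Γ → M)
    (hf : IsGroupTwoCocycle ρ f) (hg : IsGroupTwoCocycle ρ g)
    (hfn : ∀ x y : Γ, n • f x y = 0) (hgn : ∀ x y : Γ, n • g x y = 0)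
    (h : Γ → M)
    (hh : ∀ x y : Γ, f x y - g x y = Multiplicative.toAdd (ρ x) (h y) - h (x * y) + h x) :
    ∃ h' : Γ → M, (∀ x : Γ, n ^ 2 • h' x = 0) ∧
      (∀ x y : Γ, f x y - g x y = Multiplicative.toAdd (ρ x) (h' y) - h' (x * y) + h' x) :=
  eq_in_H2_torsion_sq_of_eq_in_H2_general ρ n hn hdiv f g hfn hgn h hh
end

section
/- Let Γ be a finite group of order n, let E be a group, let M be an abelian normal subgroup of E, and let π : E → Γ be a surjective homomorphism with kernel M. Suppose that every element of M is an n-th power of an element of M. Write M[n] = {m ∈ M : mⁿ = 1}. Then there exist a group H, an injective homomorphism ι : M[n] → H with normal image, a surjective homomorphism p : H → Γ with kernel ι(M[n]), and a homomorphism φ : H → E such that φ ∘ ι : M[n] → E is the inclusion of M[n] into E and π ∘ φ = p. (Consequently E = M·φ(H), i.e. E is the pushout of the extension 1 → M[n] → H → Γ → 1 along the inclusion M[n] ⊆ M.) -/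
/-!
Choose a set-theoretic section `s₀` of `π`. Its cocycle `f α β = s₀ α * s₀ β * (s₀ (α * β))⁻¹`
takes values in the abelian group `M`, on which `Γ` acts by conjugation through `s₀`.
Multiplying the cocycle identity over its last variable shows that `f ^ n` is the coboundary of
the norm `g α = ∏ γ, f α γ`. Dividing `s₀ α` by an `n`-th root of `g α` therefore yields a section
`s` whose cocycle is `n`-torsion, i.e. `s` becomes a homomorphism `Γ →* E ⧸ M[n]`; the preimage
`H` of its image is the required extension of `Γ` by `M[n]`.
-/

open scoped IsMulCommutative

section Cocycle

variable {A Γ : Type*} [CommGroup A] [Group Γ] [Fintype Γ] (σ : Γ → A →* A) (f : Γ → Γ → A)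

theorem pow_card_mul_prod_eq_of_cocycle
    (hf : ∀ α β γ, f α β * f (α * β) γ = σ α (f β γ) * f α (β * γ)) (α β : Γ) :
    f α β ^ Fintype.card Γ * ∏ γ, f (α * β) γ = σ α (∏ γ, f β γ) * ∏ γ, f α γ :=
  calc f α β ^ Fintype.card Γ * ∏ γ, f (α * β) γ
      = ∏ γ, f α β * f (α * β) γ := by
        rw [Finset.prod_mul_distrib, Finset.prod_const, Finset.card_univ]
    _ = ∏ γ, σ α (f β γ) * f α (β * γ) := by simp_rw [hf]
    _ = σ α (∏ γ, f β γ) * ∏ γ, f α (β * γ) := by rw [Finset.prod_mul_distrib, map_prod]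
    _ = σ α (∏ γ, f β γ) * ∏ γ, f α γ :=
        congrArg (σ α (∏ γ, f β γ) * ·) (Equiv.prod_comp (Equiv.mulLeft β) (f α))

theorem pow_card_eq_one_of_cocycle
    (hf : ∀ α β γ, f α β * f (α * β) γ = σ α (f β γ) * f α (β * γ))
    (h : Γ → A) (hh : ∀ α, h α ^ Fintype.card Γ = ∏ γ, f α γ) (α β : Γ) :
    ((h α)⁻¹ * (σ α (h β))⁻¹ * f α β * h (α * β)) ^ Fintype.card Γ = 1 := by
  rw [mul_pow, mul_pow, mul_pow, inv_pow, inv_pow, ← map_pow, hh, hh, hh, mul_assoc,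
    pow_card_mul_prod_eq_of_cocycle σ f hf]
  group

end Cocycle

namespace Subgroup

variable {E : Type*} [Group E] (M : Subgroup E) [IsMulCommutative M] (n : ℕ)

def torsionBy : Subgroup E where
  carrier := {x | x ∈ M ∧ x ^ n = 1}
  one_mem' := ⟨M.one_mem, one_pow n⟩
  mul_mem' {x y} hx hy :=
    ⟨M.mul_mem hx.1 hy.1, by
      rw [Commute.mul_pow (setLike_mul_comm hx.1 hy.1), hx.2, hy.2, one_mul]⟩
  inv_mem' hx := ⟨M.inv_mem hx.1, by rw [inv_pow, hx.2, inv_one]⟩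

instance torsionBy_normal [M.Normal] : (M.torsionBy n).Normal where
  conj_mem x hx g :=
    ⟨‹M.Normal›.conj_mem x hx.1 g, by rw [conj_pow, hx.2, mul_one, mul_inv_cancel]⟩

end Subgroup

theorem exists_section_cocycle_mem_torsionBy {E Γ : Type*} [Group E] [Group Γ] [Fintype Γ]
    {M : Subgroup E} [M.Normal] [IsMulCommutative M] {π : E →* Γ}
    (hπ : Function.Surjective π) (hker : π.ker = M)
    (hdiv : ∀ m ∈ M, ∃ m' ∈ M, m' ^ Fintype.card Γ = m) :
    ∃ s : Γ → E, (∀ γ, π (s γ) = γ) ∧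
      ∀ α β, s α * s β * (s (α * β))⁻¹ ∈ M.torsionBy (Fintype.card Γ) := by
  have cocycle_mem (s : Γ → E) (hs : ∀ γ, π (s γ) = γ) (α β : Γ) :
      s α * s β * (s (α * β))⁻¹ ∈ M := by
    rw [← hker, MonoidHom.mem_ker]
    simp [hs]
  have root (m : M) : ∃ r : M, r ^ Fintype.card Γ = m := by
    obtain ⟨r, hrM, hr⟩ := hdiv m m.2
    exact ⟨⟨r, hrM⟩, Subtype.ext hr⟩
  set s₀ := Function.surjInv hπ
  have hs₀ : ∀ γ, π (s₀ γ) = γ := Function.surjInv_eq hπ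
  let f (α β : Γ) : M := ⟨_, cocycle_mem s₀ hs₀ α β⟩
  let σ (α : Γ) : M →* M := (MulAut.conjNormal (s₀ α)).toMonoidHom
  have hf (α β γ : Γ) : f α β * f (α * β) γ = σ α (f β γ) * f α (β * γ) := by
    ext
    simp [f, σ, mul_assoc]
  choose h hh using fun α => root (∏ γ, f α γ)
  let s (γ : Γ) : E := (h γ : E)⁻¹ * s₀ γ
  have hs (γ : Γ) : π (s γ) = γ := by
    have : π (h γ) = 1 := MonoidHom.mem_ker.1 (hker ▸ (h γ).2)
    simp [s, this, hs₀]
  refine ⟨s, hs, fun α β => ⟨cocycle_mem s hs α β, ?_⟩⟩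
  have hcoc : (((h α)⁻¹ * (σ α (h β))⁻¹ * f α β * h (α * β) : M) : E) =
      s α * s β * (s (α * β))⁻¹ := by
    simp only [Subgroup.coe_mul, InvMemClass.coe_inv, MulEquiv.toMonoidHom_eq_coe,
      MonoidHom.coe_coe, MulAut.conjNormal_apply, f, σ, s]
    group
  rw [← hcoc, ← Subgroup.coe_pow, pow_card_eq_one_of_cocycle σ f hf h hh, Subgroup.coe_one]

section Splitting

variable {E Γ : Type*} [Group E] [Group Γ] {T : Subgroup E} [T.Normal]

def QuotientGroup.homOfSection (s : Γ → E) (hs : ∀ α β, s α * s β * (s (α * β))⁻¹ ∈ T) :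
    Γ →* E ⧸ T :=
  MonoidHom.mk' (fun γ => (s γ : E ⧸ T)) fun α β => by
    rw [← QuotientGroup.mk_mul, eq_comm, QuotientGroup.eq_iff_div_mem, div_eq_mul_inv]
    exact hs α β

variable (π : E →* Γ) (hT : T ≤ π.ker) (ψ : Γ →* E ⧸ T)
  (hψ : (QuotientGroup.lift T π hT).comp ψ = .id Γ)
include hψ

theorem surjective_comp_subtype_comap_range :
    Function.Surjective (π.comp (ψ.range.comap (QuotientGroup.mk' T)).subtype) := by
  intro γ
  obtain ⟨x, hx⟩ := QuotientGroup.mk_surjective (ψ γ)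
  refine ⟨⟨x, γ, hx.symm⟩, ?_⟩
  have := DFunLike.congr_fun hψ γ
  rwa [MonoidHom.comp_apply, ← hx, QuotientGroup.lift_mk] at this

theorem mem_comap_range_and_eq_one_iff {x : E} :
    x ∈ ψ.range.comap (QuotientGroup.mk' T) ∧ π x = 1 ↔ x ∈ T := by
  constructor
  · rintro ⟨⟨γ, hγ⟩, hx⟩
    have : γ = 1 := by
      simpa [hγ, hx] using (DFunLike.congr_fun hψ γ).symm
    rwa [this, map_one, eq_comm, QuotientGroup.mk'_apply, QuotientGroup.eq_one_iff] at hγ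
  · intro hx
    refine ⟨⟨1, ?_⟩, hT hx⟩
    rw [map_one, eq_comm, QuotientGroup.mk'_apply, QuotientGroup.eq_one_iff]
    exact hx

end Splitting

/-- Let `Γ` be a finite group of order `n`, `E` a group, `M` an abelian
normal subgroup of `E`, and `π : E → Γ` a surjective homomorphism with kernel `M`.  Suppose
every element of `M` is an `n`-th power of an element of `M`.  Then there exist a group `H`,
a surjective homomorphism `p : H → Γ` and a homomorphism `φ : H → E` with `π ∘ φ = p`, such
that `φ` is injective on `ker p` and maps `ker p` bijectively onto
`M[n] = {m ∈ M : mⁿ = 1}`.  (Equivalently: the inverse `ι : M[n] → H` of this bijection is an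
injective homomorphism with normal image `ker p`, satisfying `φ ∘ ι = (M[n] ↪ E)` and
`π ∘ φ = p`; so `E` is the pushout of `1 → M[n] → H → Γ → 1` along `M[n] ⊆ M`.) -/
theorem exists_pushout_extension_of_torsion
    {E : Type u} [Group E] (Γ : Type u) [Group Γ] [Finite Γ]
    (n : ℕ) (hn : Nat.card Γ = n)
    (M : Subgroup E) [M.Normal] (hMab : ∀ x y : M, x * y = y * x)
    (π : E →* Γ) (hπ : Function.Surjective π) (hker : π.ker = M)
    (hdiv : ∀ m ∈ M, ∃ m' ∈ M, m' ^ n = m) :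
    ∃ (H : Type u) (_ : Group H) (p : H →* Γ) (φ : H →* E),
      Function.Surjective p ∧
      π.comp φ = p ∧
      Set.InjOn φ (p.ker : Set H) ∧
      φ '' (p.ker : Set H) = {x : E | x ∈ M ∧ x ^ n = 1} := by
  have := Fintype.ofFinite Γ
  have : IsMulCommutative M := .of_comm hMab
  rw [Nat.card_eq_fintype_card] at hn
  subst hn
  obtain ⟨s, hs, hcoc⟩ := exists_section_cocycle_mem_torsionBy hπ hker hdiv
  have hT : M.torsionBy (Fintype.card Γ) ≤ π.ker := fun _ hx => by rw [hker]; exact hx.1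
  let ψ := QuotientGroup.homOfSection s hcoc
  have hψ : (QuotientGroup.lift _ π hT).comp ψ = .id Γ := MonoidHom.ext hs
  let H := ψ.range.comap (QuotientGroup.mk' _)
  refine ⟨H, inferInstance, π.comp H.subtype, H.subtype,
    surjective_comp_subtype_comap_range π hT ψ hψ, rfl, H.subtype_injective.injOn, ?_⟩
  ext x
  change _ ↔ x ∈ M.torsionBy _
  rw [← mem_comap_range_and_eq_one_iff π hT ψ hψ]
  constructor
  · rintro ⟨y, hy, rfl⟩
    exact ⟨y.2, hy⟩
  · rintro ⟨hxH, hx⟩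
    exact ⟨⟨x, hxH⟩, hx, rfl⟩
end

section
/- Let A be a discrete valuation ring with fraction field K and normalized valuation v, and let B be a bounded subgroup of GL_n(K). Then there exists g ∈ GL_n(K) such that g B g⁻¹ ⊆ GL_n(A), where GL_n(A) is viewed as a subgroup of GL_n(K) via the inclusion A ⊆ K. -/
/-!
The columns of the elements of `B` span an `A`-submodule `L ⊆ Kⁿ` which is `B`-stable and
contains `Aⁿ` (the columns of `1`). If `v t = -c`, the bound `c ≤ v (b i j)` makes `t b`
integral, so `L ⊆ t⁻¹ Aⁿ`; hence `L` is a lattice, free of rank `n` over the PID `A`. In an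
`A`-basis of `L` (which is a `K`-basis of `Kⁿ`), every `b ∈ B` and its inverse have integral
entries, so conjugating by the change-of-basis matrix lands `B` in `GL n A`.
-/
open Matrix Submodule
open scoped Pointwise

theorem Units.mem_range_map_of_injective {M N : Type*} [Monoid M] [Monoid N] {f : M →* N}
    (hf : Function.Injective f) {u : Nˣ} (hu : (u : N) ∈ Set.range f)
    (hu' : ((u⁻¹ : Nˣ) : N) ∈ Set.range f) : u ∈ (Units.map f).range := by
  obtain ⟨a, ha⟩ := hu
  obtain ⟨b, hb⟩ := hu'
  exact ⟨⟨a, b, hf (by simp [ha, hb]), hf (by simp [ha, hb])⟩, Units.ext ha⟩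

theorem Matrix.GeneralLinearGroup.mem_range_map_of_injective {n R S : Type*} [Fintype n]
    [DecidableEq n] [CommRing R] [CommRing S] {f : R →+* S} (hf : Function.Injective f)
    {g : GL n S} (hg : (g : Matrix n n S) ∈ Set.range f.mapMatrix)
    (hg' : ((g⁻¹ : GL n S) : Matrix n n S) ∈ Set.range f.mapMatrix) :
    g ∈ (map f).range :=
  Units.mem_range_map_of_injective (Matrix.map_injective hf) hg hg'

section Lattice

variable {A K : Type*} [CommRing A] [Field K] [Algebra A K]

theorem Module.Basis.isLattice_span {ι V : Type*} [Finite ι] [AddCommGroup V] [Module K V]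
    [Module A V] [IsScalarTower A K V] (b : Module.Basis ι K V) :
    IsLattice K (span A (Set.range b)) where
  fg := fg_span (Set.finite_range b)
  span_eq_top := by rw [span_span_of_tower, b.span_eq]

variable {ι : Type*} [Fintype ι]

theorem Submodule.IsLattice.exists_basis_span_eq [IsDomain A] [IsPrincipalIdealRing A]
    [IsFractionRing A K] (L : Submodule A (ι → K)) [IsLattice K L] :
    ∃ w : Module.Basis ι K (ι → K), span A (Set.range w) = L := by
  let b := Module.Free.chooseBasis A L
  let bK := b.extendOfIsLattice K
  refine ⟨bK.reindex (bK.indexEquiv (Pi.basisFun K ι)), ?_⟩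
  have hrange : Set.range bK = L.subtype '' Set.range b := by
    rw [← Set.range_comp]
    exact congrArg Set.range (funext (b.extendOfIsLattice_apply K))
  rw [Module.Basis.range_reindex, hrange, span_image, b.span_eq, map_top, range_subtype]

variable [DecidableEq ι]

theorem Module.Basis.toMatrix_mul_mul_toMatrix_mem_range [IsDomain A] [Module.IsTorsionFree A K]
    (w : Module.Basis ι K (ι → K)) {M : Matrix ι ι K}
    (hM : ∀ x ∈ span A (Set.range w), M *ᵥ x ∈ span A (Set.range w)) :
    w.toMatrix (Pi.basisFun K ι) * M * (Pi.basisFun K ι).toMatrix w ∈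
      Set.range (algebraMap A K).mapMatrix := by
  have hconj := basis_toMatrix_mul_linearMap_toMatrix_mul_basis_toMatrix w (Pi.basisFun K ι) w
    (Pi.basisFun K ι) (Matrix.toLin' M)
  rw [LinearMap.toMatrix_eq_toMatrix', LinearMap.toMatrix'_toLin'] at hconj
  rw [hconj]
  choose N hN using fun i j => (w.mem_span_iff_repr_mem A (M *ᵥ w j)).mp
    (hM _ (subset_span (Set.mem_range_self j))) i
  exact ⟨N, by ext i j; rw [LinearMap.toMatrix_apply, toLin'_apply, ← hN]; rfl⟩

theorem Submodule.IsLattice.exists_conj_mem_range_map [IsDomain A] [IsPrincipalIdealRing A]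
    [IsFractionRing A K] (L : Submodule A (ι → K)) [IsLattice K L] :
    ∃ g : GL ι K, ∀ b : GL ι K, (∀ x ∈ L, (b : Matrix ι ι K) *ᵥ x ∈ L) →
      (∀ x ∈ L, ((b⁻¹ : GL ι K) : Matrix ι ι K) *ᵥ x ∈ L) →
      g * b * g⁻¹ ∈ (GeneralLinearGroup.map (algebraMap A K)).range := by
  obtain ⟨w, rfl⟩ := exists_basis_span_eq L
  let e := Pi.basisFun K ι
  refine ⟨⟨w.toMatrix e, e.toMatrix w, w.toMatrix_mul_toMatrix_flip e,
    e.toMatrix_mul_toMatrix_flip w⟩, fun b hb hb' => ?_⟩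
  refine GeneralLinearGroup.mem_range_map_of_injective (IsFractionRing.injective A K) ?_ ?_
  · exact w.toMatrix_mul_mul_toMatrix_mem_range hb
  · simpa [mul_assoc] using w.toMatrix_mul_mul_toMatrix_mem_range hb'

end Lattice

section ColumnLattice

variable (A : Type*) {K ι : Type*} [CommRing A] [Field K] [Algebra A K] [Fintype ι]
  [DecidableEq ι]

def columnLattice (B : Subgroup (GL ι K)) : Submodule A (ι → K) :=
  span A (Set.range fun p : B × ι => ((p.1 : GL ι K) : Matrix ι ι K).col p.2)

variable {A} {B : Subgroup (GL ι K)}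

theorem mulVec_mem_columnLattice {b : GL ι K} (hb : b ∈ B) {x : ι → K}
    (hx : x ∈ columnLattice A B) : (b : Matrix ι ι K) *ᵥ x ∈ columnLattice A B := by
  have hstable : columnLattice A B ≤
      (columnLattice A B).comap ((toLin' (b : Matrix ι ι K)).restrictScalars A) := by
    rw [columnLattice, span_le]
    rintro _ ⟨⟨b', j⟩, rfl⟩
    refine subset_span ⟨(⟨b, hb⟩ * b', j), ?_⟩
    ext i
    simp [Matrix.mul_apply, Matrix.mulVec, dotProduct]
  exact hstable hx

theorem span_basisFun_le_columnLattice :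
    span A (Set.range (Pi.basisFun K ι)) ≤ columnLattice A B := by
  rw [span_le]
  rintro _ ⟨j, rfl⟩
  refine subset_span ⟨(1, j), ?_⟩
  ext i
  simp [Pi.single_apply, Matrix.one_apply, eq_comm]

theorem columnLattice_le_smul_span_basisFun [IsDomain A] [Module.IsTorsionFree A K] (t : Kˣ)
    (hB : ∀ b ∈ B, ∀ i j, (t : K) * (b : Matrix ι ι K) i j ∈ Set.range (algebraMap A K)) :
    columnLattice A B ≤ t⁻¹ • span A (Set.range (Pi.basisFun K ι)) := by
  rw [columnLattice, span_le]
  rintro _ ⟨⟨b, j⟩, rfl⟩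
  have hcol :
      t • ((b : GL ι K) : Matrix ι ι K).col j ∈ span A (Set.range (Pi.basisFun K ι)) :=
    ((Pi.basisFun K ι).mem_span_iff_repr_mem A _).mpr fun i => by
      simpa [Units.smul_def] using hB b b.2 i j
  have := smul_mem_pointwise_smul _ t⁻¹ _ hcol
  rwa [inv_smul_smul] at this

theorem isLattice_columnLattice [IsDomain A] [IsNoetherianRing A] [Module.IsTorsionFree A K]
    (t : Kˣ) (hB : ∀ b ∈ B, ∀ i j, (t : K) * (b : Matrix ι ι K) i j ∈ Set.range (algebraMap A K)) :
    IsLattice K (columnLattice A B) :=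
  have := (Pi.basisFun K ι).isLattice_span (A := A)
  IsLattice.of_le_of_isLattice_of_fg K span_basisFun_le_columnLattice
    (IsLattice.fg.of_le (columnLattice_le_smul_span_basisFun t hB))

end ColumnLattice

theorem exists_conj_mem_range_map_of_common_denominator {A K ι : Type*} [CommRing A] [IsDomain A]
    [IsPrincipalIdealRing A] [Field K] [Algebra A K] [IsFractionRing A K] [Fintype ι]
    [DecidableEq ι] (B : Subgroup (GL ι K)) (t : Kˣ)
    (hB : ∀ b ∈ B, ∀ i j, (t : K) * (b : Matrix ι ι K) i j ∈ Set.range (algebraMap A K)) :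
    ∃ g : GL ι K, ∀ b ∈ B,
      g * b * g⁻¹ ∈ (GeneralLinearGroup.map (algebraMap A K)).range := by
  have := isLattice_columnLattice t hB
  obtain ⟨g, hg⟩ := IsLattice.exists_conj_mem_range_map (columnLattice A B)
  exact ⟨g, fun b hb => hg b (fun _ => mulVec_mem_columnLattice hb)
    (fun _ => mulVec_mem_columnLattice (inv_mem hb))⟩

/-- Let `A` be a DVR with fraction field `K` and normalized valuation `v`
(so that `A` is exactly the set of elements of nonnegative valuation), and let `B` be a
bounded subgroup of `GL n K`.  Then there is `g ∈ GL n K` with `g B g⁻¹ ⊆ GL n A`, where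
`GL n A` is viewed inside `GL n K` as the range of the map induced by `A ⊆ K`. -/
theorem exists_conjugate_subset_genLinearGroup_of_bounded
    (A : Type*) [CommRing A] [IsDomain A] [IsDiscreteValuationRing A]
    (K : Type*) [Field K] [Algebra A K] [IsFractionRing A K]
    (v : AddValuation K (WithTop ℤ))
    (hv : ∀ x : K, 0 ≤ v x ↔ x ∈ (algebraMap A K).range)
    (hnorm : Function.Surjective fun x : K => v x)
    (n : ℕ) (B : Subgroup (GL (Fin n) K))
    (hB : ∃ c : ℤ, ∀ b ∈ B, ∀ i j : Fin n,
      (c : WithTop ℤ) ≤ v ((b : Matrix (Fin n) (Fin n) K) i j)) :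
    ∃ g : GL (Fin n) K, ∀ b ∈ B,
      g * b * g⁻¹ ∈ (Matrix.GeneralLinearGroup.map (n := Fin n) (algebraMap A K)).range := by
  obtain ⟨c, hc⟩ := hB
  obtain ⟨t, ht⟩ := hnorm ((-c : ℤ) : WithTop ℤ)
  have ht0 : t ≠ 0 := by
    rintro rfl
    exact WithTop.top_ne_coe (v.map_zero.symm.trans ht)
  refine exists_conj_mem_range_map_of_common_denominator B (Units.mk0 t ht0)
    fun b hb i j => (hv _).mp ?_
  calc (0 : WithTop ℤ) = ((-c : ℤ) : WithTop ℤ) + c := by norm_cast; simp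
    _ ≤ v (t * (b : Matrix (Fin n) (Fin n) K) i j) := by
      rw [v.map_mul]
      exact add_le_add ht.ge (hc b hb i j)
end
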